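/- Common contraction basin (Lemma U2). Let S be a nonempty subset of {1,...,K} and suppose: (i) {thetabar^{(k)*}}_{k in S} is in ThetaBar_S(h_w, h_mu, h_beta); (ii) max( (3/2) C_b sqrt(c_Sigma) + C_b^2 + 1/2, C_b sqrt(c_Sigma) + C_b^2 c_Sigma + C_b c_Sigma^{3/2} ) < c_1 < 1; (iii) min_{k in S} Delta^{(k)} > 0 and min_{k in S} Delta^{(k)} >= 4 C_b^{-1} max(h_mu, h_beta); (iv) h_w <= c_w/8. Then the intersection over k in S of the contraction basins B_con(theta^{(k)*}) is nonempty. Moreover, if theta = (w, mu1, mu2, beta) satisfies ||mu1 - mu1^{(k')*}||_2 <= (1/2) C_b min_{k in S} Delta^{(k)}, ||mu2 - mu2^{(k')*}||_2 <= (1/2) C_b min_{k in S} Delta^{(k)}, and ||beta - beta^{(k')*}||_2 <= (1/2) C_b min_{k in S} Delta^{(k)} for some k' in S, and |w - w^{(k'')*}| <= c_w/4 for some k'' in S, then theta belongs to B_con(theta^{(k)*}) for every k in S. -/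

import Mathlib

open MeasureTheory ProbabilityTheory Matrix Finset
open scoped RealInnerProductSpace Classical ENNReal NNReal

noncomputable section

namespace GMM

/-- Euclidean space `ℝ^p`. -/
abbrev E (p : ℕ) := EuclideanSpace ℝ (Fin p)

/-- Reinterpret a plain function as an element of Euclidean space. -/
def toE (p : ℕ) (v : Fin p → ℝ) : E p := WithLp.toLp 2 v

/-- Density of the multivariate Gaussian `N(μ, Σ)`. -/
def gaussDensity (p : ℕ) (μ : E p) (S : Matrix (Fin p) (Fin p) ℝ) (z : E p) : ℝ :=
  (2 * Real.pi) ^ (-(p : ℝ) / 2) * S.det ^ (-(1 : ℝ) / 2) *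
    Real.exp (-((fun i => z i - μ i) ⬝ᵥ (S⁻¹ *ᵥ fun i => z i - μ i)) / 2)

/-- The multivariate Gaussian measure `N(μ, Σ)` on `ℝ^p`. -/
def gaussian (p : ℕ) (μ : E p) (S : Matrix (Fin p) (Fin p) ℝ) : Measure (E p) :=
  volume.withDensity fun z => ENNReal.ofReal (gaussDensity p μ S z)

/-- Parameter of a binary GMM: mixing weight, the two means, covariance. -/
structure GMMParam (p : ℕ) where
  w : ℝ
  μ1 : E p
  μ2 : E p
  Cov : Matrix (Fin p) (Fin p) ℝ

/-- Discriminant coefficient `β = Σ⁻¹ (μ1 - μ2)`. -/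
def GMMParam.β {p : ℕ} (θ : GMMParam p) : E p :=
  toE p (θ.Cov⁻¹ *ᵥ fun i => θ.μ1 i - θ.μ2 i)

/-- Signal strength `Δ = ((μ1-μ2)ᵀ Σ⁻¹ (μ1-μ2))^{1/2}`. -/
def GMMParam.Δ {p : ℕ} (θ : GMMParam p) : ℝ :=
  Real.sqrt ((fun i => θ.μ1 i - θ.μ2 i) ⬝ᵥ (θ.Cov⁻¹ *ᵥ fun i => θ.μ1 i - θ.μ2 i))

/-- Marginal law of `Z`: the two-component Gaussian mixture. -/
def gmmMix (p : ℕ) (θ : GMMParam p) : Measure (E p) :=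
  ENNReal.ofReal (1 - θ.w) • gaussian p θ.μ1 θ.Cov + ENNReal.ofReal θ.w • gaussian p θ.μ2 θ.Cov

/-- Eigenvalue bounds `cS⁻¹ ≤ λmin(A) ≤ λmax(A) ≤ cS` (for a symmetric matrix),
expressed through the quadratic form. -/
def SpecBounds (p : ℕ) (cS : ℝ) (A : Matrix (Fin p) (Fin p) ℝ) : Prop :=
  A.IsSymm ∧ ∀ v : Fin p → ℝ,
    cS⁻¹ * (v ⬝ᵥ v) ≤ v ⬝ᵥ (A *ᵥ v) ∧ v ⬝ᵥ (A *ᵥ v) ≤ cS * (v ⬝ᵥ v)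

/-- The single-GMM parameter space `ΘBar`. -/
def InThetaBar (p : ℕ) (Mμ cw cS : ℝ) (θ : GMMParam p) : Prop :=
  ‖θ.μ1‖ ≤ Mμ ∧ ‖θ.μ2‖ ≤ Mμ ∧ cw < θ.w ∧ θ.w < 1 - cw ∧ SpecBounds p cS θ.Cov

/-- The four GMM parameters `(w, μ1, μ2, β)` that are estimated. -/
structure GMMTheta (p : ℕ) where
  w : ℝ
  μ1 : E p
  μ2 : E p
  β : E p

def GMMParam.toTheta {p : ℕ} (θ : GMMParam p) : GMMTheta p := ⟨θ.w, θ.μ1, θ.μ2, θ.β⟩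

/-- The distance `d` between parameter quadruples. -/
def dist4 {p : ℕ} (a b : GMMTheta p) : ℝ :=
  max (max |a.w - b.w| ‖a.μ1 - b.μ1‖) (max ‖a.μ2 - b.μ2‖ ‖a.β - b.β‖)

/-- Operator (spectral) norm of a matrix. -/
def opNorm (p : ℕ) (A : Matrix (Fin p) (Fin p) ℝ) : ℝ :=
  ⨆ v : {v : Fin p → ℝ // ‖toE p v‖ ≤ 1}, ‖toE p (A *ᵥ v.1)‖

/-- The joint parameter space `ΘBar_S(h_w, h_μ, h_β)`. -/
def InThetaBarS (p K : ℕ) (Mμ cw cS : ℝ) (S : Finset (Fin K)) (hw hμ hβ : ℝ)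
    (θ : Fin K → GMMParam p) : Prop :=
  (∀ k ∈ S, InThetaBar p Mμ cw cS (θ k)) ∧
  (∃ w0 : ℝ, ∀ k ∈ S, |(θ k).w - w0| ≤ hw) ∧
  (∃ m0 : E p, ∀ k ∈ S, ‖(θ k).μ1 - m0‖ ≤ hμ) ∧
  (∃ m0 : E p, ∀ k ∈ S, ‖(θ k).μ2 - m0‖ ≤ hμ) ∧
  (∃ b0 : E p, ∀ k ∈ S, ‖(θ k).β - b0‖ ≤ hβ)

/-- The space of the full multi-task data set. -/
abbrev Data (p K : ℕ) (n : Fin K → ℕ) := (k : Fin K) → Fin (n k) → E p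

/-- Law of `m` i.i.d. samples from the GMM marginal. -/
def taskLaw (p : ℕ) (θ : GMMParam p) (m : ℕ) : Measure (Fin m → E p) :=
  Measure.pi fun _ => gmmMix p θ

/-- The space carrying the concatenated samples of the outlier tasks. -/
abbrev OutlierSpace (p K : ℕ) (n : Fin K → ℕ) (S : Finset (Fin K)) :=
  (k : {k : Fin K // k ∉ S}) → Fin (n k.1) → E p

/-- Joint law of the multi-task data: tasks in `S` carry i.i.d. GMM samples (independent
across tasks), the outlier tasks carry an arbitrary law `Q`, independent of the rest. -/
def jointLaw (p K : ℕ) (n : Fin K → ℕ) (S : Finset (Fin K)) (θ : Fin K → GMMParam p)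
    (Q : Measure (OutlierSpace p K n S)) : Measure (Data p K n) :=
  ((Measure.pi fun k : {k : Fin K // k ∈ S} => taskLaw p (θ k.1) (n k.1)).prod Q).map
    fun xy k => if h : k ∈ S then xy.1 ⟨k, h⟩ else xy.2 ⟨k, h⟩

/-- The contraction basin `B_con(θ^{(k)*})`. -/
def Bcon (p : ℕ) (cw c1 Cb : ℝ) (θ : GMMParam p) (t : GMMTheta p) : Prop :=
  cw / 2 < t.w ∧ t.w < 1 - cw / 2 ∧
  (1 - c1) * θ.Δ ^ 2 < |⟪t.β, θ.μ1 - (2 : ℝ)⁻¹ • (t.μ1 + t.μ2)⟫| ∧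
  (1 - c1) * θ.Δ ^ 2 < |⟪t.β, θ.μ2 - (2 : ℝ)⁻¹ • (t.μ1 + t.μ2)⟫| ∧
  (fun i => t.β i) ⬝ᵥ (θ.Cov *ᵥ fun i => t.β i) < (1 + c1) * θ.Δ ^ 2 ∧
  ‖t.μ1 - θ.μ1‖ ≤ Cb * θ.Δ ∧ ‖t.μ2 - θ.μ2‖ ≤ Cb * θ.Δ ∧ ‖t.β - θ.β‖ ≤ Cb * θ.Δ

/-! ### Auxiliary lemmas for Lemma U2 -/

lemma inner_toE (p : ℕ) (v w : Fin p → ℝ) : ⟪toE p v, toE p w⟫ = v ⬝ᵥ w := by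
  simp [toE, dotProduct, PiLp.inner_apply, RCLike.inner_apply, mul_comm]

lemma dot_self_nonneg' (p : ℕ) (v : Fin p → ℝ) : (0:ℝ) ≤ v ⬝ᵥ v :=
  Finset.sum_nonneg fun i _ => mul_self_nonneg (v i)

lemma dot_self_eq_norm_sq (p : ℕ) (v : Fin p → ℝ) : v ⬝ᵥ v = ‖toE p v‖^2 := by
  rw [← real_inner_self_eq_norm_sq, inner_toE]

lemma symm_dot (p : ℕ) (A : Matrix (Fin p) (Fin p) ℝ) (hA : A.IsSymm) (x y : Fin p → ℝ) :
    x ⬝ᵥ (A *ᵥ y) = y ⬝ᵥ (A *ᵥ x) := by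
  rw [Matrix.dotProduct_mulVec, ← Matrix.mulVec_transpose, hA.eq, dotProduct_comm]

lemma form_nonneg (p : ℕ) (cS : ℝ) (hcS : 1 ≤ cS) (A : Matrix (Fin p) (Fin p) ℝ)
    (hA : SpecBounds p cS A) (v : Fin p → ℝ) : 0 ≤ v ⬝ᵥ (A *ᵥ v) := by
  refine le_trans ?_ (hA.2 v).1
  have h1 : (0:ℝ) ≤ cS⁻¹ := by positivity
  have h2 := dot_self_nonneg' p v
  positivity

lemma form_CS (p : ℕ) (cS : ℝ) (hcS : 1 ≤ cS) (A : Matrix (Fin p) (Fin p) ℝ)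
    (hA : SpecBounds p cS A) (x y : Fin p → ℝ) :
    (x ⬝ᵥ (A *ᵥ y))^2 ≤ (x ⬝ᵥ (A *ᵥ x)) * (y ⬝ᵥ (A *ᵥ y)) := by
  have key : ∀ t : ℝ, 0 ≤ (y ⬝ᵥ (A *ᵥ y)) * (t*t) + (2 * (x ⬝ᵥ (A *ᵥ y))) * t + (x ⬝ᵥ (A *ᵥ x)) := by
    intro t
    have := form_nonneg p cS hcS A hA (x + t • y)
    have expand : (x + t • y) ⬝ᵥ (A *ᵥ (x + t • y)) =
        (y ⬝ᵥ (A *ᵥ y)) * (t*t) + (2 * (x ⬝ᵥ (A *ᵥ y))) * t + (x ⬝ᵥ (A *ᵥ x)) := by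
      rw [Matrix.mulVec_add, Matrix.mulVec_smul]
      simp [add_dotProduct, dotProduct_add, smul_dotProduct,
        dotProduct_smul, symm_dot p A hA.1 y x]
      ring
    linarith [expand ▸ this]
  have := discrim_le_zero key
  simp only [discrim] at this
  nlinarith [this]

lemma specBounds_posDef (p : ℕ) (cS : ℝ) (hcS : 1 ≤ cS) (A : Matrix (Fin p) (Fin p) ℝ)
    (hA : SpecBounds p cS A) : A.PosDef := by
  rw [Matrix.posDef_iff_dotProduct_mulVec]
  constructor
  · show Aᴴ = A
    simpa using hA.1.eq
  · intro x hx
    have h1 : (0:ℝ) < cS⁻¹ := by positivity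
    have h2 : (0:ℝ) < x ⬝ᵥ x := by
      have hne : x ⬝ᵥ x ≠ 0 := fun h => hx (dotProduct_self_eq_zero.1 h)
      exact (dot_self_nonneg' p x).lt_of_ne (Ne.symm hne)
    calc (0:ℝ) < cS⁻¹ * (x ⬝ᵥ x) := by positivity
    _ ≤ x ⬝ᵥ (A *ᵥ x) := (hA.2 x).1
    _ = star x ⬝ᵥ (A *ᵥ x) := by simp

lemma specBounds_mul_inv (p : ℕ) (cS : ℝ) (hcS : 1 ≤ cS) (A : Matrix (Fin p) (Fin p) ℝ)
    (hA : SpecBounds p cS A) : A * A⁻¹ = 1 :=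
  Matrix.mul_nonsing_inv A (specBounds_posDef p cS hcS A hA).det_pos.ne'.isUnit

section ParamFacts

variable {p : ℕ} {cS : ℝ} (θ : GMMParam p)

/-- `Σ β = μ1 - μ2`. -/
lemma cov_mulVec_beta (hcS : 1 ≤ cS) (hA : SpecBounds p cS θ.Cov) :
    θ.Cov *ᵥ (fun i => θ.β i) = fun i => θ.μ1 i - θ.μ2 i := by
  have : (fun i => θ.β i) = θ.Cov⁻¹ *ᵥ (fun i => θ.μ1 i - θ.μ2 i) := rfl
  rw [this, Matrix.mulVec_mulVec, specBounds_mul_inv p cS hcS θ.Cov hA, Matrix.one_mulVec]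

lemma beta_form_eq (hcS : 1 ≤ cS) (hA : SpecBounds p cS θ.Cov) :
    (fun i => θ.β i) ⬝ᵥ (θ.Cov *ᵥ fun i => θ.β i) = (fun i => θ.β i) ⬝ᵥ (fun i => θ.μ1 i - θ.μ2 i) := by
  rw [cov_mulVec_beta θ hcS hA]

lemma delta_sq_eq (hcS : 1 ≤ cS) (hA : SpecBounds p cS θ.Cov) :
    θ.Δ^2 = (fun i => θ.β i) ⬝ᵥ (fun i => θ.μ1 i - θ.μ2 i) := by
  have hform : (fun i => θ.μ1 i - θ.μ2 i) ⬝ᵥ (θ.Cov⁻¹ *ᵥ fun i => θ.μ1 i - θ.μ2 i)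
      = (fun i => θ.β i) ⬝ᵥ (fun i => θ.μ1 i - θ.μ2 i) := by
    rw [show (θ.Cov⁻¹ *ᵥ fun i => θ.μ1 i - θ.μ2 i) = (fun i => θ.β i) from rfl,
      dotProduct_comm]
  have hnn : 0 ≤ (fun i => θ.μ1 i - θ.μ2 i) ⬝ᵥ (θ.Cov⁻¹ *ᵥ fun i => θ.μ1 i - θ.μ2 i) := by
    rw [hform, ← beta_form_eq θ hcS hA]
    exact form_nonneg p cS hcS θ.Cov hA _
  rw [GMMParam.Δ, Real.sq_sqrt hnn, hform]

lemma delta_sq_eq_form (hcS : 1 ≤ cS) (hA : SpecBounds p cS θ.Cov) :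
    θ.Δ^2 = (fun i => θ.β i) ⬝ᵥ (θ.Cov *ᵥ fun i => θ.β i) := by
  rw [beta_form_eq θ hcS hA, ← delta_sq_eq θ hcS hA]

lemma delta_nonneg : 0 ≤ θ.Δ := Real.sqrt_nonneg _

lemma norm_beta_le (hcS : 1 ≤ cS) (hA : SpecBounds p cS θ.Cov) :
    ‖θ.β‖ ≤ Real.sqrt cS * θ.Δ := by
  have h0 : (0:ℝ) < cS := by linarith
  have h1 : cS⁻¹ * ((fun i => θ.β i) ⬝ᵥ (fun i => θ.β i)) ≤ θ.Δ^2 := by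
    rw [delta_sq_eq_form θ hcS hA]; exact (hA.2 _).1
  have h2 : ‖θ.β‖^2 ≤ cS * θ.Δ^2 := by
    have : (fun i => θ.β i) ⬝ᵥ (fun i => θ.β i) = ‖θ.β‖^2 := by
      rw [dot_self_eq_norm_sq]; rfl
    rw [this] at h1
    calc ‖θ.β‖^2 = cS * (cS⁻¹ * ‖θ.β‖^2) := by field_simp
    _ ≤ cS * θ.Δ^2 := by nlinarith
  calc ‖θ.β‖ = Real.sqrt (‖θ.β‖^2) := (Real.sqrt_sq (norm_nonneg _)).symm
  _ ≤ Real.sqrt (cS * θ.Δ^2) := Real.sqrt_le_sqrt h2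
  _ = Real.sqrt cS * θ.Δ := by
      rw [Real.sqrt_mul h0.le, Real.sqrt_sq (delta_nonneg θ)]

lemma norm_mudiff_le (hcS : 1 ≤ cS) (hA : SpecBounds p cS θ.Cov) :
    ‖θ.μ1 - θ.μ2‖ ≤ Real.sqrt cS * θ.Δ := by
  set d : Fin p → ℝ := fun i => θ.μ1 i - θ.μ2 i with hd
  have h0 : (0:ℝ) < cS := by linarith
  have hnormd : ‖θ.μ1 - θ.μ2‖^2 = d ⬝ᵥ d := by
    rw [dot_self_eq_norm_sq]; rfl
  have hdd : d ⬝ᵥ (θ.Cov *ᵥ fun i => θ.β i) = d ⬝ᵥ d := by rw [cov_mulVec_beta θ hcS hA]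
  have hcs := form_CS p cS hcS θ.Cov hA d (fun i => θ.β i)
  rw [Matrix.dotProduct_mulVec, ← Matrix.mulVec_transpose, hA.1.eq] at hdd
  -- (d ⬝ᵥ d)^2 ≤ (d ⬝ᵥ Σ d) * Δ² ≤ cS (d⬝d) Δ²
  have key : (d ⬝ᵥ d)^2 ≤ cS * (d ⬝ᵥ d) * θ.Δ^2 := by
    have h2 := (hA.2 d).2
    have h3 : (fun i => θ.β i) ⬝ᵥ (θ.Cov *ᵥ fun i => θ.β i) = θ.Δ^2 :=
      (delta_sq_eq_form θ hcS hA).symm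
    calc (d ⬝ᵥ d)^2 = ((θ.Cov *ᵥ d) ⬝ᵥ (fun i => θ.β i))^2 := by rw [hdd]
    _ = (d ⬝ᵥ (θ.Cov *ᵥ fun i => θ.β i))^2 := by
        rw [Matrix.dotProduct_mulVec, ← Matrix.mulVec_transpose, hA.1.eq]
    _ ≤ (d ⬝ᵥ (θ.Cov *ᵥ d)) * ((fun i => θ.β i) ⬝ᵥ (θ.Cov *ᵥ fun i => θ.β i)) :=
        form_CS p cS hcS θ.Cov hA _ _
    _ ≤ cS * (d ⬝ᵥ d) * θ.Δ^2 := by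
        rw [h3]
        have hΔnn : 0 ≤ θ.Δ^2 := sq_nonneg _
        nlinarith
  have h2 : ‖θ.μ1 - θ.μ2‖^2 ≤ cS * θ.Δ^2 := by
    rcases eq_or_lt_of_le (dot_self_nonneg' p d) with h | h
    · rw [hnormd, ← h]
      positivity
    · rw [hnormd]
      nlinarith
  calc ‖θ.μ1 - θ.μ2‖ = Real.sqrt (‖θ.μ1 - θ.μ2‖^2) := (Real.sqrt_sq (norm_nonneg _)).symm
  _ ≤ Real.sqrt (cS * θ.Δ^2) := Real.sqrt_le_sqrt h2
  _ = Real.sqrt cS * θ.Δ := by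
      rw [Real.sqrt_mul h0.le, Real.sqrt_sq (delta_nonneg θ)]

lemma inner_beta_mudiff (hcS : 1 ≤ cS) (hA : SpecBounds p cS θ.Cov) :
    ⟪θ.β, θ.μ1 - θ.μ2⟫ = θ.Δ^2 := by
  rw [delta_sq_eq θ hcS hA, ← inner_toE]
  rfl

end ParamFacts

set_option maxHeartbeats 1000000 in
lemma bcon_of_close (p : ℕ) (cw cS Cb c1 : ℝ)
    (hcw0 : 0 < cw) (hcS : 1 ≤ cS) (hCb : 0 < Cb)
    (θ : GMMParam p) (hA : SpecBounds p cS θ.Cov)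
    (hw1 : cw < θ.w) (hw2 : θ.w < 1 - cw)
    (hc1lo : max (3 / 2 * Cb * Real.sqrt cS + Cb ^ 2 + 1 / 2)
        (Cb * Real.sqrt cS + Cb ^ 2 * cS + Cb * (cS * Real.sqrt cS)) < c1)
    (hc1hi : c1 < 1) (hΔpos : 0 < θ.Δ)
    (t : GMMTheta p)
    (h1 : ‖t.μ1 - θ.μ1‖ ≤ Cb * θ.Δ) (h2 : ‖t.μ2 - θ.μ2‖ ≤ Cb * θ.Δ)
    (h3 : ‖t.β - θ.β‖ ≤ Cb * θ.Δ) (hwt : |t.w - θ.w| ≤ cw / 2) :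
    Bcon p cw c1 Cb θ t := by
  set Δ := θ.Δ with hΔdef
  set sC := Real.sqrt cS with hsCdef
  have hsC1 : 1 ≤ sC := by
    rw [hsCdef, show (1:ℝ) = Real.sqrt 1 by simp]
    exact Real.sqrt_le_sqrt hcS
  have hsq : sC^2 = cS := Real.sq_sqrt (by linarith)
  have hwabs := abs_le.1 hwt
  set e1 : E p := t.μ1 - θ.μ1 with he1
  set e2 : E p := t.μ2 - θ.μ2 with he2
  set eb : E p := t.β - θ.β with heb
  set δE : E p := θ.μ1 - θ.μ2 with hδE
  have hδnorm : ‖δE‖ ≤ sC * Δ := norm_mudiff_le θ hcS hA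
  have hβnorm : ‖θ.β‖ ≤ sC * Δ := norm_beta_le θ hcS hA
  have hβΔ : ⟪θ.β, δE⟫ = Δ^2 := inner_beta_mudiff θ hcS hA
  have hteq : θ.β + eb = t.β := by rw [heb]; abel
  have htβ : ‖t.β‖ ≤ sC * Δ + Cb * Δ := by
    calc ‖t.β‖ = ‖θ.β + eb‖ := by rw [hteq]
    _ ≤ ‖θ.β‖ + ‖eb‖ := norm_add_le _ _
    _ ≤ sC * Δ + Cb * Δ := add_le_add hβnorm h3
  have hc1a : 3 / 2 * Cb * sC + Cb ^ 2 + 1 / 2 < c1 :=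
    lt_of_le_of_lt (le_max_left _ _) hc1lo
  have hc1b : Cb * sC + Cb ^ 2 * cS + Cb * (cS * sC) < c1 :=
    lt_of_le_of_lt (le_max_right _ _) hc1lo
  have hebδ : |⟪eb, δE⟫| ≤ Cb * Δ * (sC * Δ) := by
    calc |⟪eb, δE⟫| ≤ ‖eb‖ * ‖δE‖ := abs_real_inner_le_norm _ _
    _ ≤ Cb * Δ * (sC * Δ) := by
        have h0 : 0 ≤ ‖δE‖ := norm_nonneg _
        have : 0 ≤ Cb * Δ := by positivity
        exact mul_le_mul h3 hδnorm h0 this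
  have hbe12 : |⟪t.β, e1 + e2⟫| ≤ (sC * Δ + Cb * Δ) * (2 * (Cb * Δ)) := by
    calc |⟪t.β, e1 + e2⟫| ≤ ‖t.β‖ * ‖e1 + e2‖ := abs_real_inner_le_norm _ _
    _ ≤ (sC * Δ + Cb * Δ) * (2 * (Cb * Δ)) := by
        have hee : ‖e1 + e2‖ ≤ 2 * (Cb * Δ) := by
          calc ‖e1 + e2‖ ≤ ‖e1‖ + ‖e2‖ := norm_add_le _ _
          _ ≤ 2 * (Cb * Δ) := by linarith
        have h0 : 0 ≤ ‖e1 + e2‖ := norm_nonneg _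
        have h0' : 0 ≤ sC * Δ + Cb * Δ := by positivity
        exact mul_le_mul htβ hee h0 h0'
  have hebδ' := abs_le.1 hebδ
  have hbe12' := abs_le.1 hbe12
  have hinner : ⟪t.β, δE⟫ = Δ^2 + ⟪eb, δE⟫ := by
    have hs : ⟪eb, δE⟫ = ⟪t.β, δE⟫ - ⟪θ.β, δE⟫ := by rw [heb, inner_sub_left]
    linarith [hβΔ, hs]
  have hval1 : ⟪t.β, θ.μ1 - (2:ℝ)⁻¹ • (t.μ1 + t.μ2)⟫
      = 2⁻¹ * Δ^2 + 2⁻¹ * ⟪eb, δE⟫ - 2⁻¹ * ⟪t.β, e1 + e2⟫ := by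
    have hdec : θ.μ1 - (2:ℝ)⁻¹ • (t.μ1 + t.μ2)
        = (2:ℝ)⁻¹ • δE - (2:ℝ)⁻¹ • (e1 + e2) := by
      rw [hδE, he1, he2]; module
    rw [hdec, inner_sub_right, real_inner_smul_right, real_inner_smul_right]
    linarith [hinner]
  have hval2 : ⟪t.β, θ.μ2 - (2:ℝ)⁻¹ • (t.μ1 + t.μ2)⟫
      = -(2⁻¹ * Δ^2) - 2⁻¹ * ⟪eb, δE⟫ - 2⁻¹ * ⟪t.β, e1 + e2⟫ := by
    have hdec : θ.μ2 - (2:ℝ)⁻¹ • (t.μ1 + t.μ2)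
        = -((2:ℝ)⁻¹ • δE) - (2:ℝ)⁻¹ • (e1 + e2) := by
      rw [hδE, he1, he2]; module
    rw [hdec, inner_sub_right, inner_neg_right, real_inner_smul_right, real_inner_smul_right]
    linarith [hinner]
  have hP1 : 0 < (c1 - (3/2 * Cb * sC + Cb^2 + 1/2)) * (Δ * Δ) :=
    mul_pos (by linarith) (mul_pos hΔpos hΔpos)
  have hkey : (1 - c1) * Δ^2
      < 2⁻¹*Δ^2 - 2⁻¹*(Cb*Δ*(sC*Δ)) - 2⁻¹*((sC*Δ+Cb*Δ)*(2*(Cb*Δ))) := by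
    have hring : 2⁻¹*Δ^2 - 2⁻¹*(Cb*Δ*(sC*Δ)) - 2⁻¹*((sC*Δ+Cb*Δ)*(2*(Cb*Δ)))
        - (1 - c1) * Δ^2 = (c1 - (3/2 * Cb * sC + Cb^2 + 1/2)) * (Δ * Δ) := by ring
    linarith [hP1, hring]
  refine ⟨by linarith, by linarith, ?_, ?_, ?_, h1, h2, h3⟩
  · rw [hval1]
    refine lt_of_lt_of_le ?_ (le_abs_self _)
    linarith [hkey, hebδ'.1, hbe12'.2]
  · rw [hval2]
    refine lt_of_lt_of_le ?_ (neg_le_abs _)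
    linarith [hkey, hebδ'.1, hbe12'.2]
  · -- quadratic form condition
    have hexp : (fun i => t.β i) ⬝ᵥ (θ.Cov *ᵥ fun i => t.β i)
        = (fun i => θ.β i) ⬝ᵥ (θ.Cov *ᵥ fun i => θ.β i)
          + 2 * ((fun i => t.β i - θ.β i) ⬝ᵥ (θ.Cov *ᵥ fun i => θ.β i))
          + (fun i => t.β i - θ.β i) ⬝ᵥ (θ.Cov *ᵥ fun i => t.β i - θ.β i) := by
      have hb : (fun i => t.β i) = (fun i => θ.β i) + (fun i => t.β i - θ.β i) := by
        funext i; simp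
      rw [hb, Matrix.mulVec_add]
      simp only [add_dotProduct, dotProduct_add]
      rw [symm_dot p θ.Cov hA.1 (fun i => θ.β i) (fun i => t.β i - θ.β i)]
      ring
    have hevδ : (fun i => t.β i - θ.β i) ⬝ᵥ (θ.Cov *ᵥ fun i => θ.β i) = ⟪eb, δE⟫ := by
      rw [cov_mulVec_beta θ hcS hA, ← inner_toE]
      rfl
    have hform : (fun i => θ.β i) ⬝ᵥ (θ.Cov *ᵥ fun i => θ.β i) = Δ^2 :=
      (delta_sq_eq_form θ hcS hA).symm
    have hevev : (fun i => t.β i - θ.β i) ⬝ᵥ (θ.Cov *ᵥ fun i => t.β i - θ.β i)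
        ≤ cS * ‖eb‖^2 := by
      have h := (hA.2 (fun i => t.β i - θ.β i)).2
      have heq : (fun i => t.β i - θ.β i) ⬝ᵥ (fun i => t.β i - θ.β i) = ‖eb‖^2 := by
        rw [dot_self_eq_norm_sq]; rfl
      rw [heq] at h
      exact h
    have hebsq : ‖eb‖^2 ≤ (Cb * Δ)^2 := by
      exact pow_le_pow_left₀ (norm_nonneg _) h3 2
    have hsC0 : (0:ℝ) ≤ sC := by linarith
    have h9 : Cb * sC ≤ Cb * (cS * sC) := by
      calc Cb * sC = Cb * (1 * sC) := by ring
      _ ≤ Cb * (cS * sC) := by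
          exact mul_le_mul_of_nonneg_left (mul_le_mul_of_nonneg_right hcS hsC0) hCb.le
    have hP2 : 0 < (c1 - (2 * (Cb * sC) + Cb^2 * cS)) * (Δ * Δ) :=
      mul_pos (by linarith) (mul_pos hΔpos hΔpos)
    have hstep : cS * ‖eb‖^2 ≤ cS * (Cb*Δ)^2 :=
      mul_le_mul_of_nonneg_left hebsq (by linarith)
    have hring : (1+c1)*Δ^2 - (Δ^2 + 2*(Cb*Δ*(sC*Δ)) + cS*(Cb*Δ)^2)
        = (c1 - (2*(Cb*sC) + Cb^2*cS)) * (Δ*Δ) := by ring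
    rw [hexp, hform, hevδ]
    linarith [hP2, hebδ'.2, hevev, hstep, hring]
/-- **Lemma U2 (common contraction basin).** -/
theorem common_contraction_basin
    (p K : ℕ) (hp : 1 ≤ p) (Mμ cw cS Cb c1 : ℝ)
    (hM : 0 < Mμ) (hcw0 : 0 < cw) (hcw1 : cw ≤ 1 / 2) (hcS : 1 ≤ cS) (hCb : 0 < Cb)
    (S : Finset (Fin K)) (hSne : S.Nonempty)
    (hw hμ hβ : ℝ) (hhw : 0 ≤ hw) (hhμ : 0 ≤ hμ) (hhβ : 0 ≤ hβ)
    (θ : Fin K → GMMParam p)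
    (hθ : InThetaBarS p K Mμ cw cS S hw hμ hβ θ)
    (hc1lo : max (3 / 2 * Cb * Real.sqrt cS + Cb ^ 2 + 1 / 2)
        (Cb * Real.sqrt cS + Cb ^ 2 * cS + Cb * (cS * Real.sqrt cS)) < c1)
    (hc1hi : c1 < 1)
    (hΔpos : ∀ k ∈ S, 0 < (θ k).Δ)
    (hΔ : ∀ k ∈ S, 4 * Cb⁻¹ * max hμ hβ ≤ (θ k).Δ)
    (hhw' : hw ≤ cw / 8) :
    (∃ t : GMMTheta p, ∀ k ∈ S, Bcon p cw c1 Cb (θ k) t) ∧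
    ∀ t : GMMTheta p,
      (∃ k0 ∈ S, ∀ j ∈ S,
        ‖t.μ1 - (θ k0).μ1‖ ≤ (2 : ℝ)⁻¹ * Cb * (θ j).Δ ∧
        ‖t.μ2 - (θ k0).μ2‖ ≤ (2 : ℝ)⁻¹ * Cb * (θ j).Δ ∧
        ‖t.β - (θ k0).β‖ ≤ (2 : ℝ)⁻¹ * Cb * (θ j).Δ) →
      (∃ k1 ∈ S, |t.w - (θ k1).w| ≤ cw / 4) →
      ∀ k ∈ S, Bcon p cw c1 Cb (θ k) t := by
  obtain ⟨hmem, ⟨w0, hw0⟩, ⟨m1, hm1⟩, ⟨m2, hm2⟩, ⟨b0, hb0⟩⟩ := hθ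
  have main : ∀ t : GMMTheta p,
      (∃ k0 ∈ S, ∀ j ∈ S,
        ‖t.μ1 - (θ k0).μ1‖ ≤ (2 : ℝ)⁻¹ * Cb * (θ j).Δ ∧
        ‖t.μ2 - (θ k0).μ2‖ ≤ (2 : ℝ)⁻¹ * Cb * (θ j).Δ ∧
        ‖t.β - (θ k0).β‖ ≤ (2 : ℝ)⁻¹ * Cb * (θ j).Δ) →
      (∃ k1 ∈ S, |t.w - (θ k1).w| ≤ cw / 4) →
      ∀ k ∈ S, Bcon p cw c1 Cb (θ k) t := by
    rintro t ⟨k0, hk0S, hk0⟩ ⟨k1, hk1S, hk1⟩ k hkS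
    obtain ⟨hM1, hM2, hwlo, hwhi, hspec⟩ := hmem k hkS
    have hΔk := hΔpos k hkS
    have hmax : max hμ hβ ≤ Cb * (θ k).Δ / 4 := by
      have h4 := hΔ k hkS
      have hCbi : (0:ℝ) < Cb⁻¹ := by positivity
      have := mul_le_mul_of_nonneg_left h4 hCb.le
      rw [show Cb * (4 * Cb⁻¹ * max hμ hβ) = 4 * (Cb * Cb⁻¹) * max hμ hβ by ring,
        mul_inv_cancel₀ hCb.ne'] at this
      linarith
    have hμ4 : hμ ≤ Cb * (θ k).Δ / 4 := le_trans (le_max_left _ _) hmax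
    have hβ4 : hβ ≤ Cb * (θ k).Δ / 4 := le_trans (le_max_right _ _) hmax
    obtain ⟨ht1, ht2, ht3⟩ := hk0 k hkS
    -- transfer distance bounds from k0 to k
    have d1 : ‖t.μ1 - (θ k).μ1‖ ≤ Cb * (θ k).Δ := by
      have h₂ := hm1 k0 hk0S
      have h₃ := hm1 k hkS
      calc ‖t.μ1 - (θ k).μ1‖
          = ‖(t.μ1 - (θ k0).μ1) + ((θ k0).μ1 - m1) + (m1 - (θ k).μ1)‖ := by abel_nf
      _ ≤ ‖(t.μ1 - (θ k0).μ1) + ((θ k0).μ1 - m1)‖ + ‖m1 - (θ k).μ1‖ := norm_add_le _ _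
      _ ≤ ‖t.μ1 - (θ k0).μ1‖ + ‖(θ k0).μ1 - m1‖ + ‖m1 - (θ k).μ1‖ := by
          linarith [norm_add_le (t.μ1 - (θ k0).μ1) ((θ k0).μ1 - m1)]
      _ ≤ 2⁻¹ * Cb * (θ k).Δ + hμ + hμ := by
          have := norm_sub_rev m1 ((θ k).μ1)
          rw [this]
          linarith [ht1]
      _ ≤ Cb * (θ k).Δ := by linarith
    have d2 : ‖t.μ2 - (θ k).μ2‖ ≤ Cb * (θ k).Δ := by
      have h₂ := hm2 k0 hk0S
      have h₃ := hm2 k hkS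
      calc ‖t.μ2 - (θ k).μ2‖
          = ‖(t.μ2 - (θ k0).μ2) + ((θ k0).μ2 - m2) + (m2 - (θ k).μ2)‖ := by abel_nf
      _ ≤ ‖(t.μ2 - (θ k0).μ2) + ((θ k0).μ2 - m2)‖ + ‖m2 - (θ k).μ2‖ := norm_add_le _ _
      _ ≤ ‖t.μ2 - (θ k0).μ2‖ + ‖(θ k0).μ2 - m2‖ + ‖m2 - (θ k).μ2‖ := by
          linarith [norm_add_le (t.μ2 - (θ k0).μ2) ((θ k0).μ2 - m2)]
      _ ≤ 2⁻¹ * Cb * (θ k).Δ + hμ + hμ := by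
          have := norm_sub_rev m2 ((θ k).μ2)
          rw [this]
          linarith [ht2]
      _ ≤ Cb * (θ k).Δ := by linarith
    have d3 : ‖t.β - (θ k).β‖ ≤ Cb * (θ k).Δ := by
      have h₂ := hb0 k0 hk0S
      have h₃ := hb0 k hkS
      calc ‖t.β - (θ k).β‖
          = ‖(t.β - (θ k0).β) + ((θ k0).β - b0) + (b0 - (θ k).β)‖ := by abel_nf
      _ ≤ ‖(t.β - (θ k0).β) + ((θ k0).β - b0)‖ + ‖b0 - (θ k).β‖ := norm_add_le _ _
      _ ≤ ‖t.β - (θ k0).β‖ + ‖(θ k0).β - b0‖ + ‖b0 - (θ k).β‖ := by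
          linarith [norm_add_le (t.β - (θ k0).β) ((θ k0).β - b0)]
      _ ≤ 2⁻¹ * Cb * (θ k).Δ + hβ + hβ := by
          have := norm_sub_rev b0 ((θ k).β)
          rw [this]
          linarith [ht3]
      _ ≤ Cb * (θ k).Δ := by linarith
    have dw : |t.w - (θ k).w| ≤ cw / 2 := by
      have h₂ := hw0 k1 hk1S
      have h₃ := hw0 k hkS
      calc |t.w - (θ k).w|
          = |(t.w - (θ k1).w) + ((θ k1).w - w0) + (w0 - (θ k).w)| := by ring_nf
      _ ≤ |(t.w - (θ k1).w) + ((θ k1).w - w0)| + |w0 - (θ k).w| := abs_add_le _ _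
      _ ≤ |t.w - (θ k1).w| + |(θ k1).w - w0| + |w0 - (θ k).w| := by
          linarith [abs_add_le (t.w - (θ k1).w) ((θ k1).w - w0)]
      _ ≤ cw / 4 + hw + hw := by
          rw [abs_sub_comm w0 ((θ k).w)]
          linarith [hk1]
      _ ≤ cw / 2 := by linarith
    exact bcon_of_close p cw cS Cb c1 hcw0 hcS hCb (θ k) hspec hwlo hwhi hc1lo hc1hi hΔk
      t d1 d2 d3 dw
  refine ⟨?_, main⟩
  obtain ⟨k₀, hk₀⟩ := hSne
  refine ⟨(θ k₀).toTheta, fun k hk => main _ ⟨k₀, hk₀, fun j hj => ?_⟩ ⟨k₀, hk₀, ?_⟩ k hk⟩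
  · have hnn : 0 ≤ (2:ℝ)⁻¹ * Cb * (θ j).Δ := by
      have := (hΔpos j hj).le
      positivity
    refine ⟨?_, ?_, ?_⟩ <;>
      · show ‖_ - _‖ ≤ _
        simp only [GMMParam.toTheta, sub_self, norm_zero]
        exact hnn
  · show |(θ k₀).w - (θ k₀).w| ≤ cw / 4
    simp only [sub_self, abs_zero]
    positivity
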